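/- arXiv:1810.02456 — 2 statements merged into one kernel-verified Lean document; each statement's English description precedes it below -/
import Mathlib

section
/- Let G₁ and G₂ be strongly connected directed graphs with periods d₁ and d₂. Then every vertex of the Kronecker product graph G₁ ⊗ G₂ that lies on a cycle lies on cycles whose lengths have greatest common divisor equal to lcm(d₁, d₂); in particular if a connected component of G₁ ⊗ G₂ is strongly connected, its period equals lcm(d₁,d₂). -/
/-- Edge relation of the Kronecker (tensor) product of two directed graphs. -/
def prodRel {V₁ V₂ : Type*} (R₁ : V₁ → V₁ → Prop) (R₂ : V₂ → V₂ → Prop) :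
    V₁ × V₂ → V₁ × V₂ → Prop := fun a b => R₁ a.1 b.1 ∧ R₂ a.2 b.2

/-- There is a directed path of length `k` (a sequence of `k` consecutive edges)
from `u` to `v` in the graph with edge relation `R`. -/
def PathOfLength {V : Type*} (R : V → V → Prop) (k : ℕ) (u v : V) : Prop :=
  ∃ f : ℕ → V, f 0 = u ∧ f k = v ∧ ∀ i < k, R (f i) (f (i + 1))

/-- A directed graph is strongly connected if every vertex reaches every other. -/
def StronglyConnected {V : Type*} (R : V → V → Prop) : Prop :=
  ∀ u v : V, Relation.ReflTransGen R u v

/-- The set of lengths of directed cycles through the vertex `u`. -/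
def cycleLengthsAt {V : Type*} (R : V → V → Prop) (u : V) : Set ℕ :=
  {k | 0 < k ∧ PathOfLength R k u u}

/-- The set of lengths of all directed cycles in the graph. -/
def cycleLengths {V : Type*} (R : V → V → Prop) : Set ℕ :=
  {k | 0 < k ∧ ∃ u, PathOfLength R k u u}

/-- `d` is the greatest common divisor of the set `S` of natural numbers. -/
def IsGcdOfSet (d : ℕ) (S : Set ℕ) : Prop :=
  (∀ k ∈ S, d ∣ k) ∧ ∀ e : ℕ, (∀ k ∈ S, e ∣ k) → e ∣ d


/-!
The lengths of closed walks through a vertex form an additive submonoid of `ℕ`, and in a strongly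
connected graph its gcd is the period at every vertex. A closed walk through `(u₁, u₂)` in the
Kronecker product is exactly a pair of closed walks of the same length through `u₁` and `u₂`, so
its length monoid is the intersection of the two factors' monoids. A submonoid of `ℕ` contains all
large multiples of its gcd, so the intersection contains two consecutive multiples of the lcm of
the periods, which pins its gcd down to that lcm.
-/

namespace Nat

lemma setGcd_setOf_pos_and (S : Set ℕ) : setGcd {k | 0 < k ∧ k ∈ S} = setGcd S := by
  refine dvd_antisymm (dvd_setGcd_iff.mpr fun k hk => ?_) (setGcd_mono fun k hk => hk.2)
  rcases k.eq_zero_or_pos with rfl | hk₀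
  · exact dvd_zero _
  · exact setGcd_dvd_of_mem ⟨hk₀, hk⟩

lemma setGcd_inf (S T : AddSubmonoid ℕ) :
    setGcd ↑(S ⊓ T) = lcm (setGcd S) (setGcd T) := by
  refine dvd_antisymm ?_ (dvd_setGcd_iff.mpr fun k hk => lcm_dvd
    (setGcd_dvd_of_mem hk.1) (setGcd_dvd_of_mem hk.2))
  set L := lcm (setGcd S) (setGcd T)
  rcases L.eq_zero_or_pos with hL | hL
  · rw [hL]; exact dvd_zero _
  obtain ⟨M, hM⟩ := exists_mem_closure_of_ge (S : Set ℕ)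
  obtain ⟨N, hN⟩ := exists_mem_closure_of_ge (T : Set ℕ)
  rw [AddSubmonoid.closure_eq] at hM hN
  have hmem : ∀ n ≥ M + N, L * n ∈ S ⊓ T := fun n hn =>
    ⟨hM _ (by nlinarith) ((dvd_lcm_left _ _).mul_right n),
      hN _ (by nlinarith) ((dvd_lcm_right _ _).mul_right n)⟩
  have h₁ := setGcd_dvd_of_mem (hmem (M + N) le_rfl)
  have h₂ := setGcd_dvd_of_mem (hmem (M + N + 1) (by omega))
  rwa [mul_add_one, Nat.dvd_add_right h₁] at h₂

end Nat

lemma IsGcdOfSet.eq_setGcd {d : ℕ} {S : Set ℕ} (h : IsGcdOfSet d S) : d = Nat.setGcd S :=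
  dvd_antisymm (Nat.dvd_setGcd_iff.mpr h.1) (h.2 _ fun _ => Nat.setGcd_dvd_of_mem)

lemma isGcdOfSet_iff {d : ℕ} {S : Set ℕ} : IsGcdOfSet d S ↔ d = Nat.setGcd S := by
  refine ⟨IsGcdOfSet.eq_setGcd, ?_⟩
  rintro rfl
  exact ⟨fun _ => Nat.setGcd_dvd_of_mem, fun _ => Nat.dvd_setGcd_iff.mpr⟩

namespace PathOfLength

variable {V : Type*} {R : V → V → Prop} {k l : ℕ} {u v w : V}

lemma refl (R : V → V → Prop) (u : V) : PathOfLength R 0 u u :=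
  ⟨fun _ => u, rfl, rfl, fun _ h => absurd h (Nat.not_lt_zero _)⟩

lemma single (h : R u v) : PathOfLength R 1 u v := by
  refine ⟨fun i => if i = 0 then u else v, rfl, rfl, fun i hi => ?_⟩
  obtain rfl : i = 0 := by omega
  simpa using h

lemma trans (h₁ : PathOfLength R k u v) (h₂ : PathOfLength R l v w) :
    PathOfLength R (k + l) u w := by
  obtain ⟨f, hf₀, hfk, hf⟩ := h₁
  obtain ⟨g, hg₀, hgl, hg⟩ := h₂
  set p : ℕ → V := fun i => if i ≤ k then f i else g (i - k)
  have hp_right : ∀ i, k ≤ i → p i = g (i - k) := by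
    intro i hi
    by_cases hik : i ≤ k
    · obtain rfl : i = k := le_antisymm hik hi
      simp [p, hfk, hg₀]
    · simp [p, hik]
  refine ⟨p, by simp [p, hf₀], by simpa [hgl] using hp_right (k + l) (by omega), fun i hi => ?_⟩
  by_cases hik : i + 1 ≤ k
  · simpa [p, hik, (by omega : i ≤ k)] using hf i (by omega)
  · rw [hp_right i (by omega), hp_right (i + 1) (by omega), (by omega : i + 1 - k = i - k + 1)]
    exact hg _ (by omega)

lemma of_reflTransGen (h : Relation.ReflTransGen R u v) : ∃ k, PathOfLength R k u v := by
  induction h with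
  | refl => exact ⟨0, refl R u⟩
  | tail _ hvw ih =>
    obtain ⟨k, hk⟩ := ih
    exact ⟨k + 1, hk.trans (single hvw)⟩

end PathOfLength

section ClosedWalks

variable {V : Type*} (R : V → V → Prop)

def closedWalkLengths (u : V) : AddSubmonoid ℕ where
  carrier := {k | PathOfLength R k u u}
  zero_mem' := PathOfLength.refl R u
  add_mem' := PathOfLength.trans

lemma setGcd_cycleLengthsAt (u : V) :
    Nat.setGcd (cycleLengthsAt R u) = Nat.setGcd (closedWalkLengths R u) :=
  Nat.setGcd_setOf_pos_and _

lemma setGcd_cycleLengths_of_isEmpty [IsEmpty V] : Nat.setGcd (cycleLengths R) = 0 :=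
  Nat.setGcd_eq_zero_iff.mpr fun _ ⟨_, u, _⟩ => isEmptyElim u

variable {R}

lemma setGcd_closedWalkLengths_dvd (hSC : StronglyConnected R) (u v : V) :
    Nat.setGcd (closedWalkLengths R u) ∣ Nat.setGcd (closedWalkLengths R v) := by
  refine Nat.dvd_setGcd_iff.mpr fun k hk => ?_
  obtain ⟨x, hx⟩ := PathOfLength.of_reflTransGen (hSC u v)
  obtain ⟨y, hy⟩ := PathOfLength.of_reflTransGen (hSC v u)
  -- going out to `v` and back, with or without the detour `hk`
  have hxy := Nat.setGcd_dvd_of_mem (s := closedWalkLengths R u) (hx.trans hy)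
  have hxky := Nat.setGcd_dvd_of_mem (s := closedWalkLengths R u) ((hx.trans hk).trans hy)
  rwa [add_right_comm, Nat.dvd_add_right hxy] at hxky

lemma setGcd_cycleLengths (hSC : StronglyConnected R) (u : V) :
    Nat.setGcd (cycleLengths R) = Nat.setGcd (closedWalkLengths R u) := by
  refine dvd_antisymm (Nat.dvd_setGcd_iff.mpr fun k hk => ?_)
    (Nat.dvd_setGcd_iff.mpr fun k ⟨_, v, hv⟩ =>
      (setGcd_closedWalkLengths_dvd hSC u v).trans (Nat.setGcd_dvd_of_mem hv))
  rcases k.eq_zero_or_pos with rfl | hk₀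
  · exact dvd_zero _
  · exact Nat.setGcd_dvd_of_mem ⟨hk₀, u, hk⟩

end ClosedWalks

section Kronecker

variable {V₁ V₂ : Type*} {R₁ : V₁ → V₁ → Prop} {R₂ : V₂ → V₂ → Prop}

lemma pathOfLength_prodRel_iff {k : ℕ} {p q : V₁ × V₂} :
    PathOfLength (prodRel R₁ R₂) k p q ↔
      PathOfLength R₁ k p.1 q.1 ∧ PathOfLength R₂ k p.2 q.2 := by
  constructor
  · rintro ⟨f, hf₀, hfk, hf⟩
    exact ⟨⟨fun i => (f i).1, congrArg Prod.fst hf₀, congrArg Prod.fst hfk,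
        fun i hi => (hf i hi).1⟩,
      ⟨fun i => (f i).2, congrArg Prod.snd hf₀, congrArg Prod.snd hfk,
        fun i hi => (hf i hi).2⟩⟩
  · rintro ⟨⟨f, hf₀, hfk, hf⟩, ⟨g, hg₀, hgk, hg⟩⟩
    exact ⟨fun i => (f i, g i), Prod.ext hf₀ hg₀, Prod.ext hfk hgk,
      fun i hi => ⟨hf i hi, hg i hi⟩⟩

lemma closedWalkLengths_prodRel (p : V₁ × V₂) :
    closedWalkLengths (prodRel R₁ R₂) p = closedWalkLengths R₁ p.1 ⊓ closedWalkLengths R₂ p.2 :=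
  AddSubmonoid.ext fun _ => pathOfLength_prodRel_iff

lemma setGcd_closedWalkLengths_prodRel (hSC₁ : StronglyConnected R₁)
    (hSC₂ : StronglyConnected R₂) (p : V₁ × V₂) :
    Nat.setGcd (closedWalkLengths (prodRel R₁ R₂) p) =
      Nat.lcm (Nat.setGcd (cycleLengths R₁)) (Nat.setGcd (cycleLengths R₂)) := by
  rw [closedWalkLengths_prodRel, Nat.setGcd_inf, setGcd_cycleLengths hSC₁ p.1,
    setGcd_cycleLengths hSC₂ p.2]

end Kronecker

theorem period_of_kronecker_product {V₁ V₂ : Type*}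
    (R₁ : V₁ → V₁ → Prop) (R₂ : V₂ → V₂ → Prop)
    (hSC₁ : StronglyConnected R₁) (hSC₂ : StronglyConnected R₂)
    (d₁ d₂ : ℕ)
    (hd₁ : IsGcdOfSet d₁ (cycleLengths R₁)) (hd₂ : IsGcdOfSet d₂ (cycleLengths R₂)) :
    (∀ p : V₁ × V₂, (∃ k, 0 < k ∧ PathOfLength (prodRel R₁ R₂) k p p) →
        IsGcdOfSet (Nat.lcm d₁ d₂) (cycleLengthsAt (prodRel R₁ R₂) p)) ∧
      (StronglyConnected (prodRel R₁ R₂) →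
        IsGcdOfSet (Nat.lcm d₁ d₂) (cycleLengths (prodRel R₁ R₂))) := by
  obtain rfl := hd₁.eq_setGcd
  obtain rfl := hd₂.eq_setGcd
  refine ⟨fun p _ => ?_, fun hSC => ?_⟩
  · rw [isGcdOfSet_iff, setGcd_cycleLengthsAt, setGcd_closedWalkLengths_prodRel hSC₁ hSC₂]
  · rw [isGcdOfSet_iff]
    rcases isEmpty_or_nonempty (V₁ × V₂) with hV | ⟨⟨p⟩⟩
    · rw [setGcd_cycleLengths_of_isEmpty (prodRel R₁ R₂)]
      rcases isEmpty_prod.mp hV with h | h <;> simp [setGcd_cycleLengths_of_isEmpty]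
    · rw [setGcd_cycleLengths hSC p, setGcd_closedWalkLengths_prodRel hSC₁ hSC₂]
end

section
/- Let P be the transition matrix of a finite Markov chain (equivalently, a row-stochastic matrix compliant with a directed graph 𝒫). Then lim_{k→∞} P^k exists if and only if every closed strongly connected component (recurrent class) of 𝒫 is aperiodic. -/
open Matrix Filter

/-- A square real matrix is row-stochastic if it is nonnegative and all row sums equal 1. -/
def IsRowStochastic {n : Type*} [Fintype n] (A : Matrix n n ℝ) : Prop :=
  (∀ i j, 0 ≤ A i j) ∧ ∀ i, ∑ j, A i j = 1

/-!
If `P ^ k → Q` and `u` is recurrent, row `u` of `Q` sums to `1`, so some `Q u w > 0`. Then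
`(P ^ k) u w > 0` for all large `k`, and a path from `w` back to `u` closes these into cycles
through `u` of all large lengths, whose gcd is `1`.

Conversely, the return times to an aperiodic recurrent `v` form an additive monoid of gcd `1`,
so `(P ^ k) v v > 0` for all large `k`, and some power `P ^ m` has column `v` positive on the
class `C` of `v`. By Doeblin's argument this contracts the oscillation of column `v` of `P ^ k`
over `C`, which therefore tends to a constant `L` on `C`. The mass that `P ^ k` puts on transient
states decays geometrically and the mass on `C` increases to a limit `α`; splitting
`n = n / 2 + (n - n / 2)` gives `(P ^ n) u v → α * L` for every `u`. Columns of transient states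
tend to `0`.
-/

open Finset Topology

local notation:50 u:51 " ⤳[" P "] " v:51 => Relation.ReflTransGen (fun a b => 0 < P a b) u v

namespace IsGcdOfSet

lemma setGcd_eq {d : ℕ} {S : Set ℕ} (h : IsGcdOfSet d S) : Nat.setGcd S = d :=
  Nat.dvd_antisymm (h.2 _ fun _ => Nat.setGcd_dvd_of_mem) (Nat.dvd_setGcd_iff.2 h.1)

lemma eventually_mem_closure {S : Set ℕ} (h : IsGcdOfSet 1 S) :
    ∀ᶠ n in atTop, n ∈ AddSubmonoid.closure S := by
  obtain ⟨N, hN⟩ := Nat.exists_mem_closure_of_ge S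
  exact eventually_atTop.2 ⟨N, fun n hn => hN n hn (h.setGcd_eq ▸ one_dvd n)⟩

end IsGcdOfSet

lemma isGcdOfSet_one_of_eventually_mem {S : Set ℕ} (h : ∀ᶠ n in atTop, n ∈ S) :
    IsGcdOfSet 1 S := by
  refine ⟨fun k _ => one_dvd k, fun e he => ?_⟩
  obtain ⟨N, hN⟩ := eventually_atTop.1 h
  exact (Nat.dvd_add_right (he N (hN N le_rfl))).1 (he (N + 1) (hN _ N.le_succ))

namespace PathOfLength

variable {α : Type*} {R : α → α → Prop} {u v : α}

lemma zero_iff : PathOfLength R 0 u v ↔ u = v :=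
  ⟨fun ⟨_, h₀, h₁, _⟩ => h₀ ▸ h₁, fun h => ⟨fun _ => u, rfl, h, fun _ h => absurd h (by omega)⟩⟩

lemma succ_iff {k : ℕ} : PathOfLength R (k + 1) u v ↔ ∃ w, PathOfLength R k u w ∧ R w v := by
  constructor
  · rintro ⟨f, h₀, hk, hR⟩
    exact ⟨f k, ⟨f, h₀, rfl, fun i hi => hR i (by omega)⟩, hk ▸ hR k k.lt_succ_self⟩
  · rintro ⟨w, ⟨f, h₀, hk, hR⟩, hwv⟩
    refine ⟨Function.update f (k + 1) v, by simp [h₀], by simp, fun i hi => ?_⟩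
    rcases Nat.lt_succ_iff_lt_or_eq.1 hi with hi | rfl
    · simpa [Function.update_of_ne (show i ≠ k + 1 by omega),
        Function.update_of_ne (show i + 1 ≠ k + 1 by omega)] using hR i hi
    · simpa [hk] using hwv

end PathOfLength

lemma Relation.reflTransGen_iff_exists_pathOfLength {α : Type*} {R : α → α → Prop} {u v : α} :
    ReflTransGen R u v ↔ ∃ k, PathOfLength R k u v := by
  constructor
  · intro h
    induction h with
    | refl => exact ⟨0, PathOfLength.zero_iff.2 rfl⟩
    | tail _ hbc ih =>
      obtain ⟨k, hk⟩ := ih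
      exact ⟨k + 1, PathOfLength.succ_iff.2 ⟨_, hk, hbc⟩⟩
  · rintro ⟨k, hk⟩
    induction k generalizing v with
    | zero => exact PathOfLength.zero_iff.1 hk ▸ .refl
    | succ k ih =>
      obtain ⟨w, hw, hwv⟩ := PathOfLength.succ_iff.1 hk
      exact (ih hw).tail hwv

lemma tendsto_zero_of_antitone_of_le_mul {a : ℕ → ℝ} (ha : Antitone a) (h₀ : ∀ k, 0 ≤ a k)
    {m : ℕ} {r : ℝ} (hr : r < 1) (h : ∀ k, a (k + m) ≤ r * a k) : Tendsto a atTop (𝓝 0) := by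
  have hlim := tendsto_atTop_ciInf ha ⟨0, Set.forall_mem_range.2 h₀⟩
  have hinf : 0 ≤ ⨅ k, a k := le_ciInf h₀
  have hle : ⨅ k, a k ≤ r * ⨅ k, a k :=
    le_of_tendsto_of_tendsto' (hlim.comp (tendsto_add_atTop_nat m)) (hlim.const_mul r) h
  rwa [show ⨅ k, a k = 0 by nlinarith] at hlim

lemma exists_tendsto_of_sub_le_mul {lo hi : ℕ → ℝ} (hlo : Monotone lo) (hhi : Antitone hi)
    (hle : ∀ k, lo k ≤ hi k) {m : ℕ} {r : ℝ} (hr : r < 1)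
    (h : ∀ k, hi (k + m) - lo (k + m) ≤ r * (hi k - lo k)) :
    ∃ L, Tendsto lo atTop (𝓝 L) ∧ Tendsto hi atTop (𝓝 L) := by
  have hgap : Tendsto (fun k => hi k - lo k) atTop (𝓝 0) :=
    tendsto_zero_of_antitone_of_le_mul (fun _ _ hjk => sub_le_sub (hhi hjk) (hlo hjk))
      (fun k => sub_nonneg.2 (hle k)) hr h
  have hlim := tendsto_atTop_ciSup hlo
    ⟨hi 0, Set.forall_mem_range.2 fun k => (hle k).trans (hhi k.zero_le)⟩
  exact ⟨_, hlim, by simpa using hlim.add hgap⟩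

lemma exists_lt_forall_le_of_finite {ι : Type*} [Finite ι] {f : ι → ℝ} {c : ℝ}
    (h : ∀ i, f i < c) : ∃ r < c, ∀ i, f i ≤ r := by
  obtain ⟨r, hr, hrc⟩ := ((eventually_all.2 fun i =>
    (eventually_ge_nhds (h i)).filter_mono nhdsWithin_le_nhds).and
      (self_mem_nhdsWithin : ∀ᶠ r in 𝓝[<] c, r < c)).exists
  exact ⟨r, hrc, hr⟩

lemma Finset.sum_mul_le_of_le_weight {ι : Type*} [DecidableEq ι] {s : Finset ι}
    {a f : ι → ℝ} {z : ι} {δ M : ℝ} (ha : ∀ i ∈ s, 0 ≤ a i) (hsum : ∑ i ∈ s, a i = 1)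
    (hz : z ∈ s) (hδ : δ ≤ a z) (hf : ∀ i ∈ s, f i ≤ M) :
    ∑ i ∈ s, a i * f i ≤ δ * f z + (1 - δ) * M := by
  rw [← add_sum_erase s _ hz] at hsum ⊢
  have hrest : ∑ i ∈ s.erase z, a i * f i ≤ (∑ i ∈ s.erase z, a i) * M := by
    rw [sum_mul]
    exact sum_le_sum fun i hi =>
      mul_le_mul_of_nonneg_left (hf i (mem_of_mem_erase hi)) (ha i (mem_of_mem_erase hi))
  rw [show ∑ i ∈ s.erase z, a i = 1 - a z by linarith] at hrest
  nlinarith [mul_nonneg (sub_nonneg.2 hδ) (sub_nonneg.2 (hf z hz))]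

lemma Set.indicator_one_nonneg {α : Type*} (s : Set α) : 0 ≤ s.indicator (1 : α → ℝ) :=
  Set.indicator_nonneg fun _ _ => zero_le_one

namespace Matrix

section Nonneg

variable {l m n : Type*} [Fintype m]

lemma mul_apply_pos_iff {A : Matrix l m ℝ} {B : Matrix m n ℝ} (hA : ∀ i j, 0 ≤ A i j)
    (hB : ∀ i j, 0 ≤ B i j) {i : l} {j : n} :
    0 < (A * B) i j ↔ ∃ k, 0 < A i k ∧ 0 < B k j := by
  rw [mul_apply, sum_pos_iff_of_nonneg fun k _ => mul_nonneg (hA i k) (hB k j)]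
  simp only [mem_univ, true_and]
  exact exists_congr fun k => ⟨fun h => ⟨pos_of_mul_pos_left h (hB k j),
    pos_of_mul_pos_right h (hA i k)⟩, fun h => mul_pos h.1 h.2⟩

variable {A : Matrix l m ℝ} (hA : ∀ i j, 0 ≤ A i j)
include hA

lemma mulVec_mono {f g : m → ℝ} (h : f ≤ g) : A *ᵥ f ≤ A *ᵥ g :=
  fun i => sum_le_sum fun j _ => mul_le_mul_of_nonneg_left (h j) (hA i j)

lemma mulVec_nonneg {f : m → ℝ} (hf : 0 ≤ f) : 0 ≤ A *ᵥ f :=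
  fun i => sum_nonneg fun j _ => mul_nonneg (hA i j) (hf j)

lemma apply_le_mulVec_indicator {s : Set m} {i : l} {j : m} (hj : j ∈ s) :
    A i j ≤ (A *ᵥ s.indicator 1) i := by
  refine (single_le_sum (f := fun k => A i k * s.indicator 1 k)
    (fun k _ => mul_nonneg (hA i k) (s.indicator_one_nonneg k)) (mem_univ j)).trans_eq' ?_
  simp [hj]

end Nonneg

variable {V : Type*}

def IsAbsorbing (P : Matrix V V ℝ) (s : Set V) : Prop :=
  ∀ a b, a ∈ s → 0 < P a b → b ∈ s

def IsRecurrent (P : Matrix V V ℝ) (u : V) : Prop :=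
  ∀ v, u ⤳[P] v → v ⤳[P] u

lemma IsAbsorbing.mem_of_reflTransGen {P : Matrix V V ℝ} {s : Set V} (hs : IsAbsorbing P s)
    {a b : V} (ha : a ∈ s) (h : a ⤳[P] b) : b ∈ s := by
  induction h with
  | refl => exact ha
  | tail _ hbc ih => exact hs _ _ ih hbc

lemma IsRecurrent.of_reflTransGen {P : Matrix V V ℝ} {u v : V} (hu : IsRecurrent P u)
    (huv : u ⤳[P] v) : IsRecurrent P v :=
  fun w hvw => (hu w (huv.trans hvw)).trans huv

lemma isAbsorbing_setOf_isRecurrent (P : Matrix V V ℝ) : IsAbsorbing P {u | IsRecurrent P u} :=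
  fun _ _ ha hab => ha.of_reflTransGen (.single hab)

lemma exists_isRecurrent [Finite V] (P : Matrix V V ℝ) (u : V) :
    ∃ v, u ⤳[P] v ∧ IsRecurrent P v := by
  have := Fintype.ofFinite V
  classical
  induction hn : (univ.filter (u ⤳[P] ·)).card using Nat.strong_induction_on generalizing u with
  | _ n ih =>
  by_cases hu : IsRecurrent P u
  · exact ⟨u, .refl, hu⟩
  obtain ⟨w, huw, hwu⟩ : ∃ w, u ⤳[P] w ∧ ¬ w ⤳[P] u := by simpa [IsRecurrent] using hu
  have hlt : (univ.filter (w ⤳[P] ·)).card < n := hn ▸ card_lt_card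
    ⟨fun x hx => by simpa using huw.trans (by simpa using hx),
      fun h => hwu (by simpa using h (mem_filter.2 ⟨mem_univ u, .refl⟩))⟩
  obtain ⟨v, hwv, hv⟩ := ih _ hlt w rfl
  exact ⟨v, huw.trans hwv, hv⟩

variable [Fintype V] [DecidableEq V] {P A : Matrix V V ℝ}

lemma pow_add_mulVec (A : Matrix V V ℝ) (j k : ℕ) (f : V → ℝ) :
    A ^ (j + k) *ᵥ f = A ^ j *ᵥ (A ^ k *ᵥ f) := by
  rw [pow_add, mulVec_mulVec]

lemma monotone_pow_mulVec (hA : ∀ i j, 0 ≤ A i j) {f : V → ℝ} (h : f ≤ A *ᵥ f) :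
    Monotone fun k => A ^ k *ᵥ f :=
  monotone_nat_of_le_succ fun k => by
    simpa only [pow_succ, ← mulVec_mulVec] using mulVec_mono (pow_apply_nonneg hA k) h

lemma antitone_pow_mulVec (hA : ∀ i j, 0 ≤ A i j) {f : V → ℝ} (h : A *ᵥ f ≤ f) :
    Antitone fun k => A ^ k *ᵥ f :=
  antitone_nat_of_succ_le fun k => by
    simpa only [pow_succ, ← mulVec_mulVec] using mulVec_mono (pow_apply_nonneg hA k) h

section Paths

variable (hP : ∀ i j, 0 ≤ P i j)
include hP

lemma pow_apply_pos_iff_pathOfLength (k : ℕ) (u v : V) :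
    0 < (P ^ k) u v ↔ PathOfLength (fun a b => 0 < P a b) k u v := by
  induction k generalizing v with
  | zero => by_cases h : u = v <;> simp [PathOfLength.zero_iff, h]
  | succ k ih =>
    rw [pow_succ, mul_apply_pos_iff (pow_apply_nonneg hP k) hP, PathOfLength.succ_iff]
    simp only [ih]

lemma reflTransGen_iff_exists_pow_apply_pos {u v : V} : u ⤳[P] v ↔ ∃ k, 0 < (P ^ k) u v := by
  simp only [Relation.reflTransGen_iff_exists_pathOfLength, pow_apply_pos_iff_pathOfLength hP]

lemma pow_add_apply_pos {a b : ℕ} {u w v : V} (h₁ : 0 < (P ^ a) u w) (h₂ : 0 < (P ^ b) w v) :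
    0 < (P ^ (a + b)) u v := by
  rw [pow_add]
  exact (mul_apply_pos_iff (pow_apply_nonneg hP a) (pow_apply_nonneg hP b)).2 ⟨w, h₁, h₂⟩

lemma eventually_pow_apply_pos_of_pos_of_eventually {l : ℕ} {u w v : V}
    (hl : 0 < (P ^ l) u w) (h : ∀ᶠ k in atTop, 0 < (P ^ k) w v) :
    ∀ᶠ k in atTop, 0 < (P ^ k) u v := by
  filter_upwards [(tendsto_sub_atTop_nat l).eventually h, eventually_ge_atTop l] with k hk hlk
  simpa [Nat.add_sub_cancel' hlk] using pow_add_apply_pos hP hl hk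

lemma eventually_pow_apply_pos_of_eventually_of_pos {l : ℕ} {u w v : V}
    (h : ∀ᶠ k in atTop, 0 < (P ^ k) u w) (hl : 0 < (P ^ l) w v) :
    ∀ᶠ k in atTop, 0 < (P ^ k) u v := by
  filter_upwards [(tendsto_sub_atTop_nat l).eventually h, eventually_ge_atTop l] with k hk hlk
  simpa [Nat.sub_add_cancel hlk] using pow_add_apply_pos hP hk hl

/-- The times `k` with `0 < (P ^ k) v v` form an additive monoid containing the cycle lengths. -/
lemma eventually_pow_apply_self_pos {v : V}
    (h : IsGcdOfSet 1 {k | 0 < k ∧ PathOfLength (fun a b => 0 < P a b) k v v}) :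
    ∀ᶠ k in atTop, 0 < (P ^ k) v v :=
  h.eventually_mem_closure.mono fun k hk => by
    induction hk using AddSubmonoid.closure_induction with
    | mem k hk => exact (pow_apply_pos_iff_pathOfLength hP k v v).2 hk.2
    | zero => simp
    | add a b _ _ ha hb => exact pow_add_apply_pos hP ha hb

end Paths

namespace IsAbsorbing

variable {s : Set V}

lemma pow_apply_eq_zero (hs : IsAbsorbing P s) (hP : ∀ i j, 0 ≤ P i j) {a b : V} (ha : a ∈ s)
    (hb : b ∉ s) (k : ℕ) : (P ^ k) a b = 0 :=
  le_antisymm (not_lt.1 fun h => hb (hs.mem_of_reflTransGen ha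
    ((reflTransGen_iff_exists_pow_apply_pos hP).2 ⟨k, h⟩))) (pow_apply_nonneg hP k a b)

lemma indicator_le_mulVec (hs : IsAbsorbing P s) (hP : P ∈ rowStochastic ℝ V) :
    s.indicator 1 ≤ P *ᵥ s.indicator 1 := by
  intro a
  by_cases ha : a ∈ s
  · refine le_of_eq ?_
    calc s.indicator 1 a = ∑ b, P a b := by simp [ha, sum_row_of_mem_rowStochastic hP]
      _ = (P *ᵥ s.indicator 1) a := sum_congr rfl fun b _ => by
        by_cases hb : b ∈ s
        · simp [hb]
        · simpa [hb] using hs.pow_apply_eq_zero hP.1 ha hb 1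
  · simpa [ha] using mulVec_nonneg hP.1 s.indicator_one_nonneg a

lemma mulVec_indicator_compl_le (hs : IsAbsorbing P s) (hP : P ∈ rowStochastic ℝ V) :
    P *ᵥ sᶜ.indicator 1 ≤ sᶜ.indicator 1 := by
  rw [Set.indicator_compl, mulVec_sub, hP.2]
  exact sub_le_sub_left (hs.indicator_le_mulVec hP) 1

lemma exists_tendsto_pow_mulVec_indicator (hs : IsAbsorbing P s) (hP : P ∈ rowStochastic ℝ V)
    (u : V) : ∃ α, Tendsto (fun k => (P ^ k *ᵥ s.indicator 1) u) atTop (𝓝 α) := by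
  refine ⟨_, tendsto_atTop_ciSup (fun j k hjk =>
    monotone_pow_mulVec hP.1 (hs.indicator_le_mulVec hP) hjk u) ⟨1, ?_⟩⟩
  rintro _ ⟨k, rfl⟩
  have hle := mulVec_mono (pow_apply_nonneg hP.1 k)
    (Set.indicator_le_self' fun _ _ => zero_le_one : s.indicator (1 : V → ℝ) ≤ 1) u
  rwa [(pow_mem hP k).2] at hle

end IsAbsorbing

/-- By finiteness, a fixed power `A ^ m` keeps at most a fraction `r < 1` of the mass on `s`. -/
lemma tendsto_pow_mulVec_indicator_zero (hA : ∀ i j, 0 ≤ A i j) {s : Set V}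
    (hs : A *ᵥ s.indicator 1 ≤ s.indicator 1)
    (hlt : ∀ y ∈ s, ∃ m, (A ^ m *ᵥ s.indicator 1) y < 1) (u : V) :
    Tendsto (fun k => (A ^ k *ᵥ s.indicator 1) u) atTop (𝓝 0) := by
  set g : ℕ → V → ℝ := fun k => A ^ k *ᵥ s.indicator 1
  have hanti : Antitone g := antitone_pow_mulVec hA hs
  have hle : ∀ k, g k ≤ s.indicator 1 := fun k => (hanti k.zero_le).trans_eq (by simp [g])
  obtain ⟨m, hm⟩ : ∃ m, ∀ y, g m y < 1 := (eventually_all.2 fun y => by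
    by_cases hy : y ∈ s
    · obtain ⟨m, hm⟩ := hlt y hy
      exact eventually_atTop.2 ⟨m, fun k hk => (hanti hk y).trans_lt hm⟩
    · exact .of_forall fun k => (hle k y).trans_lt (by simp [hy])).exists
  obtain ⟨r, hr, hmr⟩ := exists_lt_forall_le_of_finite hm
  have hgm : g m ≤ r • s.indicator 1 := fun y => by
    by_cases hy : y ∈ s
    · simpa [hy] using hmr y
    · simpa [hy] using hle m y
  refine tendsto_zero_of_antitone_of_le_mul (fun _ _ hjk => hanti hjk u)
    (fun k => mulVec_nonneg (pow_apply_nonneg hA k) s.indicator_one_nonneg u) hr (m := m)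
    fun k => ?_
  calc g (k + m) u = (A ^ k *ᵥ g m) u := by simp [g, pow_add_mulVec]
    _ ≤ (A ^ k *ᵥ (r • s.indicator 1)) u := mulVec_mono (pow_apply_nonneg hA k) hgm u
    _ = r * g k u := by simp [g, mulVec_smul]

lemma tendsto_pow_mulVec_indicator_not_isRecurrent (hP : P ∈ rowStochastic ℝ V) (u : V) :
    Tendsto (fun k => (P ^ k *ᵥ {x | IsRecurrent P x}ᶜ.indicator 1) u) atTop (𝓝 0) := by
  refine tendsto_pow_mulVec_indicator_zero hP.1
    ((isAbsorbing_setOf_isRecurrent P).mulVec_indicator_compl_le hP) (fun y _ => ?_) u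
  obtain ⟨v, hyv, hv⟩ := exists_isRecurrent P y
  obtain ⟨l, hl⟩ := (reflTransGen_iff_exists_pow_apply_pos hP.1).1 hyv
  have hle := apply_le_mulVec_indicator (pow_apply_nonneg hP.1 l) (i := y)
    (show v ∈ {x | IsRecurrent P x} from hv)
  refine ⟨l, ?_⟩
  rw [Set.indicator_compl, mulVec_sub, (pow_mem hP l).2]
  simp only [Pi.sub_apply, Pi.one_apply]
  linarith

lemma tendsto_pow_apply_of_not_isRecurrent (hP : P ∈ rowStochastic ℝ V) {v : V}
    (hv : ¬ IsRecurrent P v) (u : V) : Tendsto (fun k => (P ^ k) u v) atTop (𝓝 0) :=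
  squeeze_zero (fun k => pow_apply_nonneg hP.1 k u v)
    (fun k => apply_le_mulVec_indicator (pow_apply_nonneg hP.1 k) hv)
    (tendsto_pow_mulVec_indicator_not_isRecurrent hP u)

namespace IsAbsorbing

variable {C : Finset V}

lemma pow_mulVec_apply_eq_sum (hC : IsAbsorbing P C) (hP : ∀ i j, 0 ≤ P i j) {w : V}
    (hw : w ∈ C) (j : ℕ) (g : V → ℝ) : (P ^ j *ᵥ g) w = ∑ x ∈ C, (P ^ j) w x * g x :=
  (sum_subset (subset_univ C) fun x _ hx => by
    simp [hC.pow_apply_eq_zero hP hw (show x ∉ (C : Set V) from hx)]).symm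

lemma pow_mulVec_le (hC : IsAbsorbing P C) (hP : P ∈ rowStochastic ℝ V) {w z : V} {j : ℕ}
    {δ M : ℝ} {g : V → ℝ} (hw : w ∈ C) (hz : z ∈ C) (hδ : δ ≤ (P ^ j) w z)
    (hg : ∀ x ∈ C, g x ≤ M) : (P ^ j *ᵥ g) w ≤ δ * g z + (1 - δ) * M := by
  rw [hC.pow_mulVec_apply_eq_sum hP.1 hw]
  refine sum_mul_le_of_le_weight (fun x _ => pow_apply_nonneg hP.1 j w x) ?_ hz hδ hg
  simpa [hC.pow_mulVec_apply_eq_sum hP.1 hw] using congrFun (pow_mem hP j).2 w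

lemma le_pow_mulVec (hC : IsAbsorbing P C) (hP : P ∈ rowStochastic ℝ V) {w z : V} {j : ℕ}
    {δ m : ℝ} {g : V → ℝ} (hw : w ∈ C) (hz : z ∈ C) (hδ : δ ≤ (P ^ j) w z)
    (hg : ∀ x ∈ C, m ≤ g x) : δ * g z + (1 - δ) * m ≤ (P ^ j *ᵥ g) w := by
  have := hC.pow_mulVec_le hP hw hz hδ (g := -g) (M := -m) fun x hx => neg_le_neg (hg x hx)
  simp only [mulVec_neg, Pi.neg_apply] at this
  linarith

/-- Doeblin's argument: since column `z` of `P ^ m` is at least `δ > 0` on `C`, every `m` steps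
shrink the oscillation of `P ^ k *ᵥ f` over `C` by the factor `1 - δ`. -/
theorem exists_squeeze_pow_mulVec (hC : IsAbsorbing P C) (hP : P ∈ rowStochastic ℝ V)
    {z : V} (hz : z ∈ C) {m : ℕ} (hm : ∀ w ∈ C, 0 < (P ^ m) w z) (f : V → ℝ) :
    ∃ L : ℝ, ∃ lo hi : ℕ → ℝ, Tendsto lo atTop (𝓝 L) ∧ Tendsto hi atTop (𝓝 L) ∧
      ∀ k, ∀ w ∈ C, lo k ≤ (P ^ k *ᵥ f) w ∧ (P ^ k *ᵥ f) w ≤ hi k := by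
  have hne : C.Nonempty := ⟨z, hz⟩
  set lo : ℕ → ℝ := fun k => C.inf' hne (P ^ k *ᵥ f)
  set hi : ℕ → ℝ := fun k => C.sup' hne (P ^ k *ᵥ f)
  have hlo : ∀ k, ∀ w ∈ C, lo k ≤ (P ^ k *ᵥ f) w := fun k w hw => inf'_le _ hw
  have hhi : ∀ k, ∀ w ∈ C, (P ^ k *ᵥ f) w ≤ hi k := fun k w hw => le_sup' _ hw
  set δ := C.inf' hne fun w => (P ^ m) w z
  have hδ : 0 < δ := (lt_inf'_iff hne).2 hm
  have hδw : ∀ w ∈ C, δ ≤ (P ^ m) w z := fun w hw => inf'_le _ hw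
  have hshift : ∀ j k, P ^ (k + j) *ᵥ f = P ^ j *ᵥ (P ^ k *ᵥ f) := fun j k => by
    rw [add_comm, pow_add_mulVec]
  have hlo_mono : Monotone lo := monotone_nat_of_le_succ fun k => le_inf' _ _ fun w hw => by
    simpa [hshift] using hC.le_pow_mulVec hP hw hw (pow_apply_nonneg hP.1 1 w w) (hlo k)
  have hhi_anti : Antitone hi := antitone_nat_of_succ_le fun k => sup'_le _ _ fun w hw => by
    simpa [hshift] using hC.pow_mulVec_le hP hw hw (pow_apply_nonneg hP.1 1 w w) (hhi k)
  have hgap : ∀ k, hi (k + m) - lo (k + m) ≤ (1 - δ) * (hi k - lo k) := fun k => by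
    have hup : hi (k + m) ≤ δ * (P ^ k *ᵥ f) z + (1 - δ) * hi k := sup'_le _ _ fun w hw => by
      simpa [hshift] using hC.pow_mulVec_le hP hw hz (hδw w hw) (hhi k)
    have hdown : δ * (P ^ k *ᵥ f) z + (1 - δ) * lo k ≤ lo (k + m) := le_inf' _ _ fun w hw => by
      simpa [hshift] using hC.le_pow_mulVec hP hw hz (hδw w hw) (hlo k)
    linarith
  obtain ⟨L, hL⟩ := exists_tendsto_of_sub_le_mul hlo_mono hhi_anti
    (fun k => (hlo k z hz).trans (hhi k z hz)) (by linarith) hgap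
  exact ⟨L, lo, hi, hL.1, hL.2, fun k w hw => ⟨hlo k w hw, hhi k w hw⟩⟩

end IsAbsorbing

lemma le_pow_add_apply (hP : P ∈ rowStochastic ℝ V) {v : V} {C : Finset V} {k : ℕ} {c : ℝ}
    (hc : ∀ w ∈ C, c ≤ (P ^ k) w v) (j : ℕ) (u : V) :
    c * (P ^ j *ᵥ (C : Set V).indicator 1) u ≤ (P ^ (j + k)) u v := by
  have hcol : c • (C : Set V).indicator 1 ≤ (P ^ k).col v := fun y => by
    by_cases hy : y ∈ C
    · simpa [hy] using hc y hy
    · simpa [hy] using pow_apply_nonneg hP.1 k y v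
  calc c * (P ^ j *ᵥ (C : Set V).indicator 1) u
      = (P ^ j *ᵥ (c • (C : Set V).indicator 1)) u := by simp [mulVec_smul]
    _ ≤ (P ^ j *ᵥ (P ^ k).col v) u := mulVec_mono (pow_apply_nonneg hP.1 j) hcol u
    _ = (P ^ (j + k)) u v := by rw [pow_add]; rfl

/-- A recurrent state outside the class `C` of `v` cannot reach `v`, so besides `C` only the
transient states contribute to column `v`. -/
lemma pow_add_apply_le (hP : P ∈ rowStochastic ℝ V) {v : V} {C : Finset V}
    (hC : ∀ w, w ∈ C ↔ v ⤳[P] w) {k : ℕ} {c : ℝ} (hc : ∀ w ∈ C, (P ^ k) w v ≤ c) (j : ℕ)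
    (u : V) :
    (P ^ (j + k)) u v ≤ c * (P ^ j *ᵥ (C : Set V).indicator 1) u +
      (P ^ j *ᵥ {x | IsRecurrent P x}ᶜ.indicator 1) u := by
  set T := {x | IsRecurrent P x}ᶜ
  have hcol : (P ^ k).col v ≤ c • (C : Set V).indicator 1 + T.indicator 1 := fun y => by
    by_cases hy : y ∈ C
    · simpa [hy] using (hc y hy).trans (le_add_of_nonneg_right (T.indicator_one_nonneg y))
    by_cases hyr : IsRecurrent P y
    · have : (P ^ k) y v = 0 := le_antisymm (not_lt.1 fun h => hy ((hC y).2 (hyr v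
        ((reflTransGen_iff_exists_pow_apply_pos hP.1).2 ⟨k, h⟩)))) (pow_apply_nonneg hP.1 k y v)
      simp [T, hy, hyr, this]
    · simpa [T, hy, hyr] using le_one_of_mem_rowStochastic (pow_mem hP k)
  calc (P ^ (j + k)) u v = (P ^ j *ᵥ (P ^ k).col v) u := by rw [pow_add]; rfl
    _ ≤ (P ^ j *ᵥ (c • (C : Set V).indicator 1 + T.indicator 1)) u :=
        mulVec_mono (pow_apply_nonneg hP.1 j) hcol u
    _ = _ := by simp [mulVec_add, mulVec_smul]

theorem exists_tendsto_pow_apply_of_isRecurrent (hP : P ∈ rowStochastic ℝ V) {v : V}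
    (hv : IsRecurrent P v) (hap : ∀ᶠ k in atTop, 0 < (P ^ k) v v) (u : V) :
    ∃ L, Tendsto (fun n => (P ^ n) u v) atTop (𝓝 L) := by
  classical
  set C : Finset V := univ.filter (v ⤳[P] ·)
  have hmem : ∀ w, w ∈ C ↔ v ⤳[P] w := by simp [C]
  have hC : IsAbsorbing P C := fun a b ha hab => by simpa [C] using ((hmem a).1 ha).tail hab
  obtain ⟨m, hm⟩ : ∃ m, ∀ w ∈ C, 0 < (P ^ m) w v := ((eventually_all_finset C).2 fun w hw => by
    obtain ⟨l, hl⟩ := (reflTransGen_iff_exists_pow_apply_pos hP.1).1 (hv w ((hmem w).1 hw))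
    exact eventually_pow_apply_pos_of_pos_of_eventually hP.1 hl hap).exists
  obtain ⟨L, lo, hi, hlo, hhi, hbd⟩ :=
    hC.exists_squeeze_pow_mulVec hP ((hmem v).2 .refl) hm (Pi.single v 1)
  simp only [mulVec_single_one, col_apply] at hbd
  obtain ⟨α, hα⟩ := hC.exists_tendsto_pow_mulVec_indicator hP u
  have hhalf : Tendsto (fun n => n / 2) atTop atTop := Nat.tendsto_div_const_atTop two_ne_zero
  have hrest : Tendsto (fun n => n - n / 2) atTop atTop :=
    tendsto_atTop_mono (fun n => by omega) hhalf
  have hsplit : ∀ n, n / 2 + (n - n / 2) = n := fun n => by omega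
  have hlower := (hlo.comp hrest).mul (hα.comp hhalf)
  have hupper := ((hhi.comp hrest).mul (hα.comp hhalf)).add
    ((tendsto_pow_mulVec_indicator_not_isRecurrent hP u).comp hhalf)
  rw [add_zero] at hupper
  refine ⟨L * α, tendsto_of_tendsto_of_tendsto_of_le_of_le hlower hupper (fun n => ?_) fun n => ?_⟩
  · simpa [hsplit] using le_pow_add_apply hP (fun w hw => (hbd (n - n / 2) w hw).1) (n / 2) u
  · simpa [hsplit] using pow_add_apply_le hP hmem (fun w hw => (hbd (n - n / 2) w hw).2) (n / 2) u

theorem isGcdOfSet_one_of_tendsto_pow (hP : P ∈ rowStochastic ℝ V) {Q : Matrix V V ℝ}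
    (hQ : Tendsto (fun k => P ^ k) atTop (𝓝 Q)) {u : V} (hu : IsRecurrent P u) :
    IsGcdOfSet 1 {k | 0 < k ∧ PathOfLength (fun a b => 0 < P a b) k u u} := by
  have hentry : ∀ w, Tendsto (fun k => (P ^ k) u w) atTop (𝓝 (Q u w)) := fun w =>
    tendsto_pi_nhds.1 (tendsto_pi_nhds.1 hQ u) w
  have hrow : ∑ w, Q u w = 1 := tendsto_nhds_unique (tendsto_finsetSum _ fun w _ => hentry w)
    (by simp only [sum_row_of_mem_rowStochastic (pow_mem hP _)]; exact tendsto_const_nhds)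
  obtain ⟨w, -, hw⟩ := exists_ne_zero_of_sum_ne_zero (hrow ▸ one_ne_zero)
  have hpos : ∀ᶠ k in atTop, 0 < (P ^ k) u w :=
    ((hentry w).eventually_ne hw).mono fun k hk => (pow_apply_nonneg hP.1 k u w).lt_of_ne' hk
  obtain ⟨l, hl⟩ := (reflTransGen_iff_exists_pow_apply_pos hP.1).1
    (hu w ((reflTransGen_iff_exists_pow_apply_pos hP.1).2 hpos.exists))
  refine isGcdOfSet_one_of_eventually_mem ?_
  filter_upwards [eventually_pow_apply_pos_of_eventually_of_pos hP.1 hpos hl,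
    eventually_gt_atTop 0] with k hk hk₀
  exact ⟨hk₀, (pow_apply_pos_iff_pathOfLength hP.1 k u u).1 hk⟩

end Matrix

/-- A vertex `u` lies in a closed class iff every vertex reachable from `u` can reach `u` back;
aperiodicity of that class is the statement that the gcd of the lengths of cycles through `u`
is `1`. -/
theorem stochastic_powers_converge_iff {V : Type*} [Fintype V] [DecidableEq V]
    (P : Matrix V V ℝ) (hP : IsRowStochastic P) :
    (∃ Q : Matrix V V ℝ, Tendsto (fun k => P ^ k) atTop (nhds Q)) ↔
      ∀ u : V,
        (∀ v : V, Relation.ReflTransGen (fun a b => 0 < P a b) u v →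
          Relation.ReflTransGen (fun a b => 0 < P a b) v u) →
        IsGcdOfSet 1 {k | 0 < k ∧ PathOfLength (fun a b => 0 < P a b) k u u} := by
  replace hP : P ∈ rowStochastic ℝ V := mem_rowStochastic_iff_sum.2 hP
  refine ⟨fun ⟨Q, hQ⟩ u hu => isGcdOfSet_one_of_tendsto_pow hP hQ hu, fun hap => ?_⟩
  have hentry : ∀ u v, ∃ L, Tendsto (fun n => (P ^ n) u v) atTop (𝓝 L) := fun u v => by
    by_cases hv : IsRecurrent P v
    · exact exists_tendsto_pow_apply_of_isRecurrent hP hv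
        (eventually_pow_apply_self_pos hP.1 (hap v hv)) u
    · exact ⟨0, tendsto_pow_apply_of_not_isRecurrent hP hv u⟩
  choose L hL using hentry
  exact ⟨of L, tendsto_pi_nhds.2 fun u => tendsto_pi_nhds.2 fun v => hL u v⟩
end
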